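/- Let G and G' be node-neighboring graphs on V with G ⊆ G', differing at a vertex u, and let τ ∈ ℕ. Then every edge of Clip(G', τ) that is not an edge of Clip(G, τ) is incident to u, and the number of such edges is at most τ. -/

import Mathlib

open scoped symmDiff

variable {V : Type*}

noncomputable section

/-- Degree of a vertex `v` in `G`. -/
def deg [Fintype V] (G : SimpleGraph V) (v : V) : ℕ :=
  (G.neighborSet v).ncard

/-- Maximum degree of `G`. -/
def maxDeg [Fintype V] (G : SimpleGraph V) : ℕ :=
  Finset.univ.sup (deg G)

/-- Number of vertices of `G` with degree at least `τ`. -/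
def Ntau [Fintype V] (G : SimpleGraph V) (τ : ℕ) : ℕ :=
  {v : V | τ ≤ deg G v}.ncard

/-- Edge distance: the number of edges in the symmetric difference of the edge sets. -/
def edgeDist (G G' : SimpleGraph V) : ℕ :=
  (G.edgeSet ∆ G'.edgeSet).ncard

/-- Lexicographic key of an edge: the unordered pair written with its smaller endpoint first,
compared lexicographically. -/
def edgeKey [LinearOrder V] (e : Sym2 V) : Lex (V × V) :=
  Sym2.lift ⟨fun a b => toLex (min a b, max a b), fun a b => by simp only []; rw [min_comm, max_comm]⟩ e

/-- `e` is among the `τ` smallest edges (in the fixed lexicographic order) incident to `v`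
in `G`. -/
def clipKeep [Fintype V] [LinearOrder V] (G : SimpleGraph V) (τ : ℕ) (v : V)
    (e : Sym2 V) : Prop :=
  {e' ∈ G.incidenceSet v | edgeKey e' ≤ edgeKey e}.ncard ≤ τ

/-- The clipped graph `Clip G τ`: an edge of `G` is retained iff, for each of its two
endpoints `v`, it is among the `τ` smallest edges incident to `v` in `G`. -/
def Clip [Fintype V] [LinearOrder V] (G : SimpleGraph V) (τ : ℕ) : SimpleGraph V where
  Adj a b := G.Adj a b ∧ clipKeep G τ a s(a, b) ∧ clipKeep G τ b s(a, b)
  symm := by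
    refine ⟨fun a b h => ?_⟩
    refine ⟨h.1.symm, ?_, ?_⟩
    · rw [Sym2.eq_swap]; exact h.2.2
    · rw [Sym2.eq_swap]; exact h.2.1
  loopless := ⟨fun a h => G.loopless.irrefl a h.1⟩

/-- Naive clipping: delete every edge having at least one endpoint of degree `> τ` in `G`. -/
def NaiveClip [Fintype V] (G : SimpleGraph V) (τ : ℕ) : SimpleGraph V where
  Adj a b := G.Adj a b ∧ deg G a ≤ τ ∧ deg G b ≤ τ
  symm := ⟨fun _ _ h => ⟨h.1.symm, h.2.2, h.2.1⟩⟩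
  loopless := ⟨fun a h => G.loopless.irrefl a h.1⟩

/-- The graph obtained from `G` by deleting all vertices in `S` together with their
incident edges. -/
def deleteVerts (G : SimpleGraph V) (S : Set V) : SimpleGraph V where
  Adj a b := G.Adj a b ∧ a ∉ S ∧ b ∉ S
  symm := ⟨fun _ _ h => ⟨h.1.symm, h.2.2, h.2.1⟩⟩
  loopless := ⟨fun a h => G.loopless.irrefl a h.1⟩

/-- `DelN G τ`: the minimum cardinality of a vertex set whose deletion bounds the maximum
degree of `G` by `τ`. (The paper's `Q_Del-N(G, τ)` equals `-DelN G τ`.) -/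
def DelN [Fintype V] (G : SimpleGraph V) (τ : ℕ) : ℕ :=
  sInf {n | ∃ S : Set V, S.ncard = n ∧ maxDeg (deleteVerts G S) ≤ τ}

/-- Total excess of vertex degrees over `τ`. (The paper's `Q_Del-Deg(G, τ)` equals
`-fExcess G τ / 2`.) -/
def fExcess [Fintype V] (G : SimpleGraph V) (τ : ℕ) : ℕ :=
  ∑ v, (deg G v - τ)

/-- A `τ`-feasible pair `(x, y)` for the LP relaxation of node deletion. -/
structure IsFeasible [Fintype V] (G : SimpleGraph V) (τ : ℕ) (x : V → ℝ)
    (y : Sym2 V → ℝ) : Prop where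
  x_mem : ∀ v, x v ∈ Set.Icc (0 : ℝ) 1
  y_mem : ∀ e ∈ G.edgeSet, y e ∈ Set.Icc (0 : ℝ) 1
  edge_cons : ∀ a b, G.Adj a b → 1 - x a - x b ≤ y s(a, b)
  deg_cons : ∀ v, ∑ᶠ e ∈ G.incidenceSet v, y e ≤ (τ : ℝ)

/-- The LP value: infimum of `Σ_v x_v` over all `τ`-feasible pairs.
(The paper's `Q_LP-Del-N(G, τ)` equals `-LPDelN G τ`.) -/
def LPDelN [Fintype V] (G : SimpleGraph V) (τ : ℕ) : ℝ :=
  sInf {t : ℝ | ∃ x y, IsFeasible G τ x y ∧ t = ∑ v, x v}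
/-! Enlarging a graph can only raise the rank of an edge at each endpoint, so an edge kept by
`Clip G' τ` that already lies in `G` is kept by `Clip G τ` too: the new edges lie in `G' \ G`,
hence are incident to `u`. They are all edges of `Clip G' τ` at `u`, and there are at most `τ`
of those: the one of largest key at `u` is among the `τ` smallest edges of `G` at `u`, and every
other edge of `Clip G' τ` at `u` precedes it. -/

section Clip

variable [Fintype V] [LinearOrder V] {G G' : SimpleGraph V} {τ : ℕ}

lemma clipKeep_of_le (h : G ≤ G') {v : V} {e : Sym2 V} (hk : clipKeep G' τ v e) :
    clipKeep G τ v e := by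
  refine (Set.ncard_le_ncard ?_ (Set.toFinite _)).trans hk
  exact fun _ ⟨⟨he, hv⟩, hle⟩ => ⟨⟨SimpleGraph.edgeSet_mono h he, hv⟩, hle⟩

lemma clip_le (G : SimpleGraph V) (τ : ℕ) : Clip G τ ≤ G := fun _ _ h => h.1

lemma mem_edgeSet_clip_of_le (h : G ≤ G') {e : Sym2 V} (heG : e ∈ G.edgeSet)
    (he : e ∈ (Clip G' τ).edgeSet) : e ∈ (Clip G τ).edgeSet := by
  induction e using Sym2.ind with
  | _ a b =>
    exact show (Clip G τ).Adj a b from ⟨heG, clipKeep_of_le h he.2.1, clipKeep_of_le h he.2.2⟩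

lemma clipKeep_of_mem_incidenceSet_clip {v : V} {e : Sym2 V}
    (he : e ∈ (Clip G τ).incidenceSet v) : clipKeep G τ v e := by
  obtain ⟨he, hv⟩ := he
  induction e using Sym2.ind with
  | _ a b =>
    rcases Sym2.mem_iff.mp hv with rfl | rfl
    · exact he.2.1
    · exact he.2.2

lemma ncard_incidenceSet_clip_le (G : SimpleGraph V) (τ : ℕ) (v : V) :
    ((Clip G τ).incidenceSet v).ncard ≤ τ := by
  rcases ((Clip G τ).incidenceSet v).eq_empty_or_nonempty with h | h
  · simp [h]
  obtain ⟨e, he, hmax⟩ := Set.Finite.exists_maximalFor edgeKey _ (Set.toFinite _) h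
  refine (Set.ncard_le_ncard ?_ (Set.toFinite _)).trans (clipKeep_of_mem_incidenceSet_clip he)
  intro e' he'
  refine ⟨⟨SimpleGraph.edgeSet_mono (clip_le G τ) he'.1, he'.2⟩, ?_⟩
  exact (le_total (edgeKey e') (edgeKey e)).elim id (hmax he')

end Clip

/-- For node-neighboring graphs `G ⊆ G'` differing at `u`, every edge of
`Clip G' τ` that is not an edge of `Clip G τ` is incident to `u`, and there are at most `τ`
such edges. -/
theorem clip_new_edges_incident_and_card_le [Fintype V] [LinearOrder V]
    (G G' : SimpleGraph V) (u : V) (τ : ℕ)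
    (hsub : G ≤ G')
    (hdiff : ∀ e ∈ G'.edgeSet, e ∉ G.edgeSet → u ∈ e) :
    (∀ e ∈ (Clip G' τ).edgeSet, e ∉ (Clip G τ).edgeSet → u ∈ e) ∧
      ((Clip G' τ).edgeSet \ (Clip G τ).edgeSet).ncard ≤ τ := by
  have hinc : ∀ e ∈ (Clip G' τ).edgeSet, e ∉ (Clip G τ).edgeSet → u ∈ e := by
    intro e he hnew
    by_contra hu
    have heG : e ∈ G.edgeSet := by
      by_contra heG
      exact hu (hdiff e (SimpleGraph.edgeSet_mono (clip_le G' τ) he) heG)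
    exact hnew (mem_edgeSet_clip_of_le hsub heG he)
  have hsubset : (Clip G' τ).edgeSet \ (Clip G τ).edgeSet ⊆ (Clip G' τ).incidenceSet u :=
    fun e ⟨he, hnew⟩ => ⟨he, hinc e he hnew⟩
  exact ⟨hinc, (Set.ncard_le_ncard hsubset (Set.toFinite _)).trans
    (ncard_incidenceSet_clip_le G' τ u)⟩

end
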